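/- Uniform decay of the harmonic-oscillator resolvent kernel function: let d ≥ 1, c > 0 and 0 < δ < 2c. For h ∈ (0,1] and z ∈ ℂ with Re z ≤ −c, define G_{z,h}(μ) = 2 ∫_0^{1/h} (1−hσ)^{−z/h} (1+hσ)^{z/h + d − 2} e^{−σμ} dσ for μ ∈ ℂ (with principal real powers of the positive reals 1−hσ and 1+hσ). Then G_{z,h} is holomorphic in μ on the sector D_δ = {μ ∈ ℂ : |Im μ| ≤ Re μ + δ}, and for every n ∈ ℕ there exists C_n > 0 (depending only on n, d, c, δ) such that for all h ∈ (0,1], all z with Re z ≤ −c, and all μ ∈ D_δ: |∂_μ^n G_{z,h}(μ)| ≤ C_n (1 + |μ|)^{−(n+1)}. -/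

import Mathlib

/-!
For `0 ≤ hσ ≤ 1` the weight `(1 - hσ)^{-z/h} (1 + hσ)^{z/h + d - 2}` has modulus at most
`2^d ((1 - hσ)/(1 + hσ))^{-Re z/h} ≤ 2^d e^{2 Re z σ}`, because `(1 - x)/(1 + x) ≤ e^{-2x}`
(the power series of `log (1 + x) - log (1 - x)` has nonnegative terms, the first being `2x`).
Differentiating `n` times under the integral sign (the interval is compact) gives
`|∂_μ^n G_{z,h}(μ)| ≤ 2^{d+1} ∫_0^∞ σ^n e^{-(Re μ - 2 Re z)σ} dσ
  = 2^{d+1} n! / (Re μ - 2 Re z)^{n+1}`,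
and on the sector `D_δ` the quantity `Re μ - 2 Re z ≥ Re μ + 2c` is bounded below by a
multiple of `1 + |μ|`.
-/

/-- The resolvent kernel function
`G_{z,h}(μ) = 2 ∫_0^{1/h} (1-hσ)^{-z/h} (1+hσ)^{z/h+d-2} e^{-σμ} dσ`. -/
noncomputable def Gker (d : ℕ) (z : ℂ) (h : ℝ) (μ : ℂ) : ℂ :=
  2 * ∫ σ in (0 : ℝ)..(1 / h),
      ((1 - h * σ : ℝ) : ℂ) ^ (-z / (h : ℂ)) *
        ((1 + h * σ : ℝ) : ℂ) ^ (z / (h : ℂ) + (d : ℂ) - 2) *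
        Complex.exp (-(σ : ℂ) * μ)

open Real Set MeasureTheory
open scoped Interval Nat Complex

lemma two_mul_le_log_one_add_sub_log_one_sub {x : ℝ} (hx0 : 0 ≤ x) (hx1 : x < 1) :
    2 * x ≤ log (1 + x) - log (1 - x) := by
  have hsum := hasSum_log_sub_log_of_abs_lt_one (abs_lt.2 ⟨by linarith, hx1⟩)
  simpa using le_hasSum hsum 0 fun k _ => by positivity

lemma one_sub_le_one_add_mul_exp_neg_two_mul {x : ℝ} (hx : 0 ≤ x) :
    1 - x ≤ (1 + x) * exp (-2 * x) := by
  rcases le_or_gt 1 x with hx1 | hx1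
  · nlinarith [exp_pos (-2 * x)]
  calc 1 - x = exp (log (1 - x)) := (exp_log (by linarith)).symm
    _ ≤ exp (log (1 + x) - 2 * x) := by
        gcongr; linarith [two_mul_le_log_one_add_sub_log_one_sub hx hx1]
    _ = (1 + x) * exp (-2 * x) := by
        rw [sub_eq_add_neg, exp_add, exp_log (by linarith), neg_mul]

lemma one_sub_rpow_mul_one_add_rpow_neg_le {x a : ℝ} (hx0 : 0 ≤ x) (hx1 : x ≤ 1)
    (ha : 0 ≤ a) :
    (1 - x) ^ a * (1 + x) ^ (-a) ≤ exp (-2 * a * x) := by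
  have h1 : 0 ≤ 1 - x := by linarith
  have h2 : 0 < 1 + x := by linarith
  calc (1 - x) ^ a * (1 + x) ^ (-a) = ((1 - x) / (1 + x)) ^ a := by
        rw [div_rpow h1 h2.le, rpow_neg h2.le, div_eq_mul_inv]
    _ ≤ exp (-2 * x) ^ a := by
        gcongr
        rw [div_le_iff₀ h2, mul_comm]
        exact one_sub_le_one_add_mul_exp_neg_two_mul hx0
    _ = exp (-2 * a * x) := by rw [← exp_mul]; ring_nf

section LaplaceOnInterval

variable {w : ℝ → ℂ} {T : ℝ}

lemma hasDerivAt_mul_pow_mul_cexp (a : ℂ) (σ : ℝ) (n : ℕ) (μ : ℂ) :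
    HasDerivAt (fun μ => a * ((-σ : ℂ) ^ n * cexp (-σ * μ)))
      (a * ((-σ : ℂ) ^ (n + 1) * cexp (-σ * μ))) μ := by
  have := (((hasDerivAt_id μ).const_mul (-σ : ℂ)).cexp.const_mul ((-σ : ℂ) ^ n)).const_mul a
  refine this.congr_deriv ?_
  simp only [id, mul_one, pow_succ]
  ring

lemma hasDerivAt_integral_mul_pow_mul_cexp (hw : IntervalIntegrable w volume 0 T) (n : ℕ)
    (μ₀ : ℂ) :
    HasDerivAt (fun μ => ∫ σ in 0..T, w σ * ((-σ : ℂ) ^ n * cexp (-σ * μ)))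
      (∫ σ in 0..T, w σ * ((-σ : ℂ) ^ (n + 1) * cexp (-σ * μ₀))) μ₀ := by
  have hint (k : ℕ) (μ : ℂ) :
      IntervalIntegrable (fun σ => w σ * ((-σ : ℂ) ^ k * cexp (-σ * μ))) volume 0 T :=
    hw.mul_continuousOn (by fun_prop)
  have hbound : ∀ σ ∈ Ι 0 T, ∀ μ ∈ Metric.ball μ₀ 1,
      ‖w σ * ((-σ : ℂ) ^ (n + 1) * cexp (-σ * μ))‖ ≤
        ‖w σ‖ * (|T| ^ (n + 1) * exp (|T| * (‖μ₀‖ + 1))) := by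
    intro σ hσ μ hμ
    have hσT : |σ| ≤ |T| := by simpa using abs_sub_left_of_mem_uIcc (uIoc_subset_uIcc hσ)
    have hμ' : ‖μ‖ ≤ ‖μ₀‖ + 1 := by
      have := norm_le_norm_add_norm_sub' μ μ₀
      rw [Metric.mem_ball, dist_eq_norm] at hμ
      linarith
    rw [norm_mul, norm_mul, norm_pow, norm_neg, Complex.norm_real, norm_eq_abs]
    gcongr
    refine (Complex.norm_exp_le_exp_norm _).trans (exp_le_exp.2 ?_)
    rw [norm_mul, norm_neg, Complex.norm_real, norm_eq_abs]
    gcongr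
  exact (intervalIntegral.hasDerivAt_integral_of_dominated_loc_of_deriv_le
    (Metric.ball_mem_nhds μ₀ one_pos)
    (Filter.Eventually.of_forall fun μ => (hint n μ).def'.aestronglyMeasurable)
    (hint n μ₀) (hint (n + 1) μ₀).def'.aestronglyMeasurable
    (Filter.Eventually.of_forall hbound) (hw.norm.mul_const _)
    (Filter.Eventually.of_forall fun σ _ μ _ => hasDerivAt_mul_pow_mul_cexp _ σ n μ)).2

lemma iteratedDeriv_integral_mul_cexp (hw : IntervalIntegrable w volume 0 T) (n : ℕ) :
    iteratedDeriv n (fun μ => ∫ σ in 0..T, w σ * cexp (-σ * μ)) =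
      fun μ => ∫ σ in 0..T, w σ * ((-σ : ℂ) ^ n * cexp (-σ * μ)) := by
  induction n with
  | zero => simp
  | succ n ih =>
    rw [iteratedDeriv_succ, ih]
    exact funext fun μ => (hasDerivAt_integral_mul_pow_mul_cexp hw n μ).deriv

lemma differentiable_integral_mul_cexp (hw : IntervalIntegrable w volume 0 T) :
    Differentiable ℂ (fun μ => ∫ σ in 0..T, w σ * cexp (-σ * μ)) := fun μ => by
  simpa using (hasDerivAt_integral_mul_pow_mul_cexp hw 0 μ).differentiableAt

lemma norm_integral_mul_pow_mul_cexp_le {K b : ℝ} {μ : ℂ} (hT : 0 ≤ T) (hK : 0 ≤ K)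
    (hb : b < μ.re) (hw : ∀ σ ∈ Icc 0 T, ‖w σ‖ ≤ K * exp (b * σ)) (n : ℕ) :
    ‖∫ σ in 0..T, w σ * ((-σ : ℂ) ^ n * cexp (-σ * μ))‖ ≤
      K * n ! / (μ.re - b) ^ (n + 1) := by
  have hbound : ∀ σ ∈ Ioc 0 T, ‖w σ * ((-σ : ℂ) ^ n * cexp (-σ * μ))‖ ≤
      K * (σ ^ n * exp (-((μ.re - b) * σ))) := by
    intro σ hσ
    rw [norm_mul, norm_mul, norm_pow, norm_neg, Complex.norm_real, norm_eq_abs,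
      abs_of_pos hσ.1, Complex.norm_exp]
    calc ‖w σ‖ * (σ ^ n * exp (-σ * μ).re)
        ≤ K * exp (b * σ) * (σ ^ n * exp (-σ * μ).re) :=
          mul_le_mul_of_nonneg_right (hw σ (Ioc_subset_Icc_self hσ))
            (mul_nonneg (pow_nonneg hσ.1.le n) (exp_pos _).le)
      _ = K * (σ ^ n * (exp (b * σ) * exp (-σ * μ.re))) := by
          rw [show (-σ * μ : ℂ).re = -σ * μ.re by simp]; ring
      _ = K * (σ ^ n * exp (-((μ.re - b) * σ))) := by
          rw [← exp_add]; ring_nf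
  calc ‖∫ σ in 0..T, w σ * ((-σ : ℂ) ^ n * cexp (-σ * μ))‖
      ≤ ∫ σ in 0..T, K * (σ ^ n * exp (-((μ.re - b) * σ))) :=
        intervalIntegral.norm_integral_le_of_norm_le hT
          (Filter.Eventually.of_forall hbound) (by apply Continuous.intervalIntegrable; fun_prop)
    _ = K * ∫ σ in 0..T, σ ^ n * exp (-((μ.re - b) * σ)) :=
        intervalIntegral.integral_const_mul _ _
    _ ≤ K * (n ! / (μ.re - b) ^ (n + 1)) := by
        gcongr
        exact intervalIntegral_pow_mul_exp_neg_le hT (by linarith)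
    _ = K * n ! / (μ.re - b) ^ (n + 1) := by ring

end LaplaceOnInterval

noncomputable def kernelWeight (d : ℕ) (z : ℂ) (h σ : ℝ) : ℂ :=
  ((1 - h * σ : ℝ) : ℂ) ^ (-z / (h : ℂ)) *
    ((1 + h * σ : ℝ) : ℂ) ^ (z / (h : ℂ) + (d : ℂ) - 2)

section kernelWeight

variable {d : ℕ} {z : ℂ} {h σ : ℝ}

lemma norm_kernelWeight_le (hh : 0 < h) (hz : z.re < 0) (hσ : σ ∈ Icc 0 (1 / h)) :
    ‖kernelWeight d z h σ‖ ≤ 2 ^ d * exp (2 * z.re * σ) := by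
  set x := h * σ
  set a := -z.re / h
  have hx0 : 0 ≤ x := mul_nonneg hh.le hσ.1
  have hx1 : x ≤ 1 := by simpa [x, mul_comm] using (le_div_iff₀ hh).1 hσ.2
  have ha : 0 < a := div_pos (neg_pos.2 hz) hh
  have hre₁ : (-z / (h : ℂ)).re = a := by simp [a, Complex.div_ofReal_re]
  have hre₂ : (z / (h : ℂ) + (d : ℂ) - 2).re = -a + (d - 2) := by
    simp [a, Complex.div_ofReal_re]; ring
  have hpow : (1 + x) ^ ((d : ℝ) - 2) ≤ 2 ^ d := by
    calc (1 + x) ^ ((d : ℝ) - 2) ≤ (1 + x) ^ (d : ℝ) := by gcongr <;> linarith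
      _ ≤ 2 ^ (d : ℝ) := by gcongr; linarith
      _ = 2 ^ d := rpow_natCast 2 d
  calc ‖kernelWeight d z h σ‖ = (1 - x) ^ a * (1 + x) ^ (-a) * (1 + x) ^ ((d : ℝ) - 2) := by
        rw [kernelWeight, norm_mul, Complex.norm_cpow_eq_rpow_re_of_nonneg (by linarith)
          (by rw [hre₁]; exact ha.ne'), Complex.norm_cpow_eq_rpow_re_of_pos (by linarith),
          hre₁, hre₂, rpow_add (by linarith), mul_assoc]
    _ ≤ exp (-2 * a * x) * 2 ^ d := by
        gcongr
        exact one_sub_rpow_mul_one_add_rpow_neg_le hx0 hx1 ha.le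
    _ = 2 ^ d * exp (2 * z.re * σ) := by
        rw [mul_comm]; congr 2; simp only [a, x]; field_simp

lemma intervalIntegrable_kernelWeight (hh : 0 < h) (hz : z.re < 0) :
    IntervalIntegrable (kernelWeight d z h) volume 0 (1 / h) := by
  have hre : 0 < (-z / (h : ℂ)).re := by
    rw [Complex.div_ofReal_re, Complex.neg_re]; exact div_pos (by linarith) hh
  refine ContinuousOn.intervalIntegrable_of_Icc (by positivity) ?_
  refine ((Complex.continuous_ofReal_cpow_const hre).comp (by fun_prop)).continuousOn.mul ?_
  intro σ hσ
  refine (ContinuousAt.cpow (by fun_prop) continuousAt_const ?_).continuousWithinAt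
  exact Complex.ofReal_mem_slitPlane.2 (by nlinarith [hσ.1])

end kernelWeight

section Gker

variable {d : ℕ} {z : ℂ} {h : ℝ}

lemma Gker_eq_integral_kernelWeight_mul_cexp :
    Gker d z h = fun μ => 2 * ∫ σ in 0..1 / h, kernelWeight d z h σ * cexp (-σ * μ) :=
  rfl

lemma differentiable_Gker (hh : 0 < h) (hz : z.re < 0) : Differentiable ℂ (Gker d z h) := by
  rw [Gker_eq_integral_kernelWeight_mul_cexp]
  exact (differentiable_integral_mul_cexp (intervalIntegrable_kernelWeight hh hz)).const_mul 2

lemma norm_iteratedDeriv_Gker_le (hh : 0 < h) (hz : z.re < 0) {μ : ℂ} (hμ : 2 * z.re < μ.re)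
    (n : ℕ) :
    ‖iteratedDeriv n (Gker d z h) μ‖ ≤ 2 ^ (d + 1) * n ! / (μ.re - 2 * z.re) ^ (n + 1) := by
  rw [Gker_eq_integral_kernelWeight_mul_cexp, iteratedDeriv_const_mul_field,
    iteratedDeriv_integral_mul_cexp (intervalIntegrable_kernelWeight hh hz), norm_mul,
    Complex.norm_two, pow_succ, mul_comm _ (2 : ℝ), mul_assoc, mul_div_assoc]
  gcongr
  exact norm_integral_mul_pow_mul_cexp_le (by positivity) (by positivity) hμ
    (fun σ hσ => norm_kernelWeight_le hh hz hσ) n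

end Gker

lemma one_add_norm_le_mul_of_abs_im_le {μ : ℂ} {δ ε s : ℝ} (hδ : 0 ≤ δ) (hε : 0 < ε)
    (hμ : |μ.im| ≤ μ.re + δ) (hs : μ.re + δ + ε ≤ s) :
    1 + ‖μ‖ ≤ ((1 + δ) / ε + 2) * s := by
  have hnorm := Complex.norm_le_abs_re_add_abs_im μ
  have hsε : ε ≤ s := by linarith [abs_nonneg μ.im]
  have h1 : 1 + δ ≤ (1 + δ) / ε * s := by
    rw [div_mul_eq_mul_div, le_div_iff₀ hε]; gcongr
  rcases le_or_gt 0 μ.re with hre | hre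
  · rw [abs_of_nonneg hre] at hnorm; nlinarith
  · rw [abs_of_neg hre] at hnorm; nlinarith

theorem stmt_17_general (d : ℕ) (c δ : ℝ) (hc : 0 < c) (hδ0 : 0 < δ) (hδ : δ < 2 * c) :
    (∀ h ∈ Set.Ioc (0 : ℝ) 1, ∀ z : ℂ, z.re ≤ -c →
      DifferentiableOn ℂ (Gker d z h) {μ : ℂ | |μ.im| ≤ μ.re + δ}) ∧
    (∀ n : ℕ, ∃ C > 0, ∀ h ∈ Set.Ioc (0 : ℝ) 1, ∀ z : ℂ, z.re ≤ -c →
      ∀ μ : ℂ, |μ.im| ≤ μ.re + δ →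
        ‖iteratedDeriv n (Gker d z h) μ‖ ≤
          C * (1 + ‖μ‖) ^ (-((n : ℝ) + 1))) := by
  have hz_neg {z : ℂ} (hz : z.re ≤ -c) : z.re < 0 := hz.trans_lt (neg_neg_of_pos hc)
  refine ⟨fun h hh z hz => (differentiable_Gker hh.1 (hz_neg hz)).differentiableOn, fun n => ?_⟩
  have hε : 0 < 2 * c - δ := by linarith
  set A := (1 + δ) / (2 * c - δ) + 2
  have hA : 0 < A := by positivity
  refine ⟨2 ^ (d + 1) * n ! * A ^ (n + 1), by positivity, fun h hh z hz μ hμ => ?_⟩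
  set s := μ.re - 2 * z.re
  have hs : 0 < s := by linarith [abs_nonneg μ.im]
  have hsector : 1 + ‖μ‖ ≤ A * s :=
    one_add_norm_le_mul_of_abs_im_le hδ0.le hε hμ (by linarith)
  calc ‖iteratedDeriv n (Gker d z h) μ‖ ≤ 2 ^ (d + 1) * n ! / s ^ (n + 1) :=
        norm_iteratedDeriv_Gker_le hh.1 (hz_neg hz) (by linarith) n
    _ = 2 ^ (d + 1) * n ! * A ^ (n + 1) * ((A * s) ^ (n + 1))⁻¹ := by
        rw [mul_pow]
        field_simp
    _ ≤ 2 ^ (d + 1) * n ! * A ^ (n + 1) * ((1 + ‖μ‖) ^ (n + 1))⁻¹ := by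
        gcongr
    _ = 2 ^ (d + 1) * n ! * A ^ (n + 1) * (1 + ‖μ‖) ^ (-((n : ℝ) + 1)) := by
        rw [rpow_neg (by positivity), ← Nat.cast_add_one, rpow_natCast]

/-- Uniform decay of the harmonic-oscillator resolvent kernel function:
for `0 < δ < 2c`, `G_{z,h}` is holomorphic in `μ` on the sector
`D_δ = {μ : |Im μ| ≤ Re μ + δ}`, and for every `n` there is `C_n > 0` such that for all
`h ∈ (0,1]`, all `z` with `Re z ≤ -c`, and all `μ ∈ D_δ`,
`|∂_μ^n G_{z,h}(μ)| ≤ C_n (1 + |μ|)^{-(n+1)}`. -/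
theorem stmt_17 (d : ℕ) (hd : 1 ≤ d) (c δ : ℝ) (hc : 0 < c) (hδ0 : 0 < δ) (hδ : δ < 2 * c) :
    (∀ h ∈ Set.Ioc (0 : ℝ) 1, ∀ z : ℂ, z.re ≤ -c →
      DifferentiableOn ℂ (Gker d z h) {μ : ℂ | |μ.im| ≤ μ.re + δ}) ∧
    (∀ n : ℕ, ∃ C > 0, ∀ h ∈ Set.Ioc (0 : ℝ) 1, ∀ z : ℂ, z.re ≤ -c →
      ∀ μ : ℂ, |μ.im| ≤ μ.re + δ →
        ‖iteratedDeriv n (Gker d z h) μ‖ ≤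
          C * (1 + ‖μ‖) ^ (-((n : ℝ) + 1))) :=
  stmt_17_general d c δ hc hδ0 hδ
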